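/- Consider an instance G=(V,E) of the MST problem under explorable uncertainty with predicted values ŵ. Let E_M ⊆ E be the set of mandatory edges and E_P ⊆ E the set of prediction mandatory edges. Then every edge e in the symmetric difference E_M Δ E_P satisfies h←(e) ≥ 1; consequently the hop distance satisfies k_h ≥ |E_M Δ E_P|. -/

import Mathlib

/-!
Common framework: the minimum spanning tree problem under explorable
uncertainty with (untrusted) predictions.
-/

open scoped BigOperators
open scoped Classical

noncomputable section

/-- An instance of the MST problem under explorable uncertainty with predictions:
a connected (multi)graph whose edges carry uncertainty intervals (open `(L,U)` for
non-trivial edges, i.e. `L < U`, and the singleton `{L}` for trivial edges, i.e. `L = U`)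
together with predicted values `pw e` lying in the intervals. -/
structure UncGraph where
  V : Type
  E : Type
  fintV : Fintype V
  fintE : Fintype E
  decV : DecidableEq V
  decE : DecidableEq E
  ends : E → Sym2 V
  conn : ∀ u v : V, Relation.ReflTransGen (fun a b => ∃ e : E, ends e = s(a, b)) u v
  L : E → ℝ
  U : E → ℝ
  LU : ∀ e, L e ≤ U e
  pw : E → ℝ
  pw_mem : ∀ e, (L e = U e ∧ pw e = L e) ∨ (L e < pw e ∧ pw e < U e)

attribute [instance] UncGraph.fintV UncGraph.fintE UncGraph.decV UncGraph.decE

namespace UncGraph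

variable (G : UncGraph)

/-- The uncertainty interval of an edge: the open interval `(L e, U e)` for a
non-trivial edge, the singleton `{L e}` for a trivial edge (`L e = U e`). -/
def I (e : G.E) : Set ℝ :=
  {x | (G.L e = G.U e ∧ x = G.L e) ∨ (G.L e < x ∧ x < G.U e)}

/-- A trivial edge: its interval is a singleton. -/
def TrivialEdge (e : G.E) : Prop := G.L e = G.U e

/-- A non-trivial edge: its interval is a nonempty open interval. -/
def NontrivialEdge (e : G.E) : Prop := G.L e < G.U e

/-- `w` is a valid realization of true edge weights. -/
def Valid (w : G.E → ℝ) : Prop := ∀ e, w e ∈ G.I e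

/-- Connectivity of two vertices using only edges from `S`. -/
def ConnectsVia (S : Finset G.E) (u v : G.V) : Prop :=
  Relation.ReflTransGen (fun a b => ∃ e ∈ S, G.ends e = s(a, b)) u v

/-- `S` is a spanning tree: it connects all vertices and has `|V| - 1` edges. -/
def IsSpanningTree (S : Finset G.E) : Prop :=
  (∀ u v : G.V, G.ConnectsVia S u v) ∧ S.card + 1 = Fintype.card G.V

/-- `T` is a minimum spanning tree with respect to the weight function `wf`. -/
def IsMST (wf : G.E → ℝ) (T : Finset G.E) : Prop :=
  G.IsSpanningTree T ∧ ∀ T', G.IsSpanningTree T' → ∑ e ∈ T, wf e ≤ ∑ e ∈ T', wf e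

/-- `wf` agrees with the true values `w` on the queried set `Q` and lies in the
uncertainty intervals elsewhere. -/
def Compatible (w : G.E → ℝ) (Q : Finset G.E) (wf : G.E → ℝ) : Prop :=
  (∀ e ∈ Q, wf e = w e) ∧ ∀ e, wf e ∈ G.I e

/-- The query set `Q` verifies `T`: `T` is an MST for every weight function
compatible with the revealed values. -/
def Verifies (w : G.E → ℝ) (Q T : Finset G.E) : Prop :=
  ∀ wf, G.Compatible w Q wf → G.IsMST wf T

/-- `Q` is a feasible query set for true values `w`. -/
def Feasible (w : G.E → ℝ) (Q : Finset G.E) : Prop :=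
  ∃ T, G.Verifies w Q T

/-- The minimum cardinality of a feasible query set. -/
def optCost (w : G.E → ℝ) : ℕ :=
  sInf {n | ∃ Q, G.Feasible w Q ∧ Q.card = n}

/-- `Q` is an optimal (minimum-cardinality feasible) query set. -/
def IsOptimal (w : G.E → ℝ) (Q : Finset G.E) : Prop :=
  G.Feasible w Q ∧ ∀ Q', G.Feasible w Q' → Q.card ≤ Q'.card

/-- An edge is mandatory if it belongs to every feasible query set. -/
def Mandatory (w : G.E → ℝ) (e : G.E) : Prop :=
  ∀ Q, G.Feasible w Q → e ∈ Q

/-- A witness set intersects every feasible query set. -/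
def IsWitnessSet (w : G.E → ℝ) (W : Finset G.E) : Prop :=
  ∀ Q, G.Feasible w Q → ∃ e ∈ W, e ∈ Q

/-- An edge is prediction mandatory if it is mandatory under the assumption that
all queries return the predicted values. -/
def PredMandatory (e : G.E) : Prop := G.Mandatory G.pw e

/-- An instance is prediction mandatory free if it has no prediction mandatory edge. -/
def PredMandatoryFree : Prop := ∀ e, ¬ G.PredMandatory e

/-- Hop-distance indicator `k_{e'}(e)`: `0` if the prediction `p e` has the same
relation to the interval `I e'` as the true value `w e` (both `≤ L e'`, both
`≥ U e'`, or both strictly inside), and `1` otherwise. -/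
def kErr (p w : G.E → ℝ) (e e' : G.E) : ℕ :=
  if (p e ≤ G.L e' ∧ w e ≤ G.L e') ∨ (G.U e' ≤ p e ∧ G.U e' ≤ w e) ∨
      (G.L e' < p e ∧ p e < G.U e' ∧ G.L e' < w e ∧ w e < G.U e')
  then 0 else 1

/-- `h→(e) = Σ_{e' ≠ e} k_{e'}(e)`. -/
def hright (p w : G.E → ℝ) (e : G.E) : ℕ :=
  ∑ e' ∈ Finset.univ.erase e, G.kErr p w e e'

/-- `h←(e) = Σ_{e' ≠ e} k_e(e')`. -/
def hleft (p w : G.E → ℝ) (e : G.E) : ℕ :=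
  ∑ e' ∈ Finset.univ.erase e, G.kErr p w e' e

/-- `h→(E') = Σ_{e ∈ E'} h→(e)`. -/
def hrightSum (p w : G.E → ℝ) (S : Finset G.E) : ℕ := ∑ e ∈ S, G.hright p w e

/-- `h←(E') = Σ_{e ∈ E'} h←(e)`. -/
def hleftSum (p w : G.E → ℝ) (S : Finset G.E) : ℕ := ∑ e ∈ S, G.hleft p w e

/-- The hop distance of prediction `p` for realization `w`. -/
def hopDist (p w : G.E → ℝ) : ℕ := ∑ e, G.hright p w e

/-- The hop distance `k_h` of the instance's predictions for realization `w`. -/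
def khop (w : G.E → ℝ) : ℕ := G.hopDist G.pw w

/-- Lower-limit weights `w^L`: `L e + ε` for non-trivial edges, the known value
for trivial edges. -/
def lowerWeight (ε : ℝ) (e : G.E) : ℝ := if G.L e = G.U e then G.L e else G.L e + ε

/-- Upper-limit weights `w^U`: `U e - ε` for non-trivial edges, the known value
for trivial edges. -/
def upperWeight (ε : ℝ) (e : G.E) : ℝ := if G.L e = G.U e then G.L e else G.U e - ε

/-- `T` is a lower limit tree: an MST for `w^L` for all sufficiently small `ε > 0`. -/
def IsLowerLimitTree (T : Finset G.E) : Prop :=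
  ∃ ε₀ > (0 : ℝ), ∀ ε : ℝ, 0 < ε → ε < ε₀ → G.IsMST (G.lowerWeight ε) T

/-- `T` is an upper limit tree: an MST for `w^U` for all sufficiently small `ε > 0`. -/
def IsUpperLimitTree (T : Finset G.E) : Prop :=
  ∃ ε₀ > (0 : ℝ), ∀ ε : ℝ, 0 < ε → ε < ε₀ → G.IsMST (G.upperWeight ε) T

/-- `T` is simultaneously the unique lower limit tree and the unique upper
limit tree (`T_L = T_U`, both unique). -/
def UniqueLimitTrees (T : Finset G.E) : Prop :=
  G.IsLowerLimitTree T ∧ G.IsUpperLimitTree T ∧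
  (∀ T', G.IsLowerLimitTree T' → T' = T) ∧
  (∀ T', G.IsUpperLimitTree T' → T' = T)

/-- Number of edge-ends of `S` incident to `v` (loops count twice). -/
def incCount (S : Finset G.E) (v : G.V) : ℕ :=
  ∑ e ∈ S, (if G.ends e = s(v, v) then 2 else if v ∈ G.ends e then 1 else 0)

/-- `S` forms a single cycle: nonempty, every vertex has degree `0` or `2`,
and the support is connected. -/
def IsCycle (S : Finset G.E) : Prop :=
  S.Nonempty ∧ (∀ v, G.incCount S v = 0 ∨ G.incCount S v = 2) ∧
  ∀ u v, G.incCount S u ≠ 0 → G.incCount S v ≠ 0 → G.ConnectsVia S u v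

/-- `C` is the cycle closed by adding the edge `f` to the tree `T`. -/
def IsCycleOf (T : Finset G.E) (f : G.E) (C : Finset G.E) : Prop :=
  G.IsCycle C ∧ f ∈ C ∧ C ⊆ insert f T

/-- `e'` lies in the cut `X_e` between the two components of `T \ {e}`. -/
def InCut (T : Finset G.E) (e e' : G.E) : Prop :=
  ∀ u v : G.V, G.ends e' = s(u, v) → ¬ G.ConnectsVia (T.erase e) u v

/-- `S` is a path between the (distinct) vertices `a` and `b`. -/
def IsPathBetween (S : Finset G.E) (a b : G.V) : Prop :=
  a ≠ b ∧ G.incCount S a = 1 ∧ G.incCount S b = 1 ∧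
  (∀ v, v ≠ a → v ≠ b → G.incCount S v = 0 ∨ G.incCount S v = 2) ∧
  ∀ v, G.incCount S v ≠ 0 → G.ConnectsVia S a v

/-- `{f, l}` is an edge of the vertex cover instance `Ḡ` (w.r.t. the tree `T`):
`f ∉ T`, `l ≠ f` lies on the cycle closed by `f`, both are non-trivial, and
their intervals intersect. -/
def VCEdge (T : Finset G.E) (f l : G.E) : Prop :=
  f ∉ T ∧ l ≠ f ∧ G.NontrivialEdge f ∧ G.NontrivialEdge l ∧
  (∃ C, G.IsCycleOf T f C ∧ l ∈ C) ∧ (G.I f ∩ G.I l).Nonempty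

/-- Adjacency in the vertex cover instance `Ḡ` (symmetrized). -/
def VCAdj (T : Finset G.E) (a b : G.E) : Prop := G.VCEdge T a b ∨ G.VCEdge T b a

/-- `S` is a vertex cover of the vertex cover instance `Ḡ`. -/
def IsVCCover (T S : Finset G.E) : Prop :=
  ∀ a b, G.VCAdj T a b → a ∈ S ∨ b ∈ S

/-- `S` is a minimum vertex cover of the vertex cover instance `Ḡ`. -/
def IsMinVC (T S : Finset G.E) : Prop :=
  G.IsVCCover T S ∧ ∀ S', G.IsVCCover T S' → S.card ≤ S'.card

/-- Edge `e` does not occur in the instance anymore: independently of the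
remaining uncertainty it can be deleted (some MST avoids it, for every
realization) or contracted (some MST contains it, for every realization). -/
def Removable (e : G.E) : Prop :=
  (∀ wf : G.E → ℝ, (∀ e', wf e' ∈ G.I e') → ∃ T, G.IsMST wf T ∧ e ∉ T) ∨
  (∀ wf : G.E → ℝ, (∀ e', wf e' ∈ G.I e') → ∃ T, G.IsMST wf T ∧ e ∈ T)

end UncGraph

/-- The instance obtained from `G` by querying the edges of `Q` under true
values `w`: the intervals of queried edges collapse to the revealed values. -/
def UncGraph.restrict (G : UncGraph) (w : G.E → ℝ) (Q : Finset G.E) : UncGraph where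
  V := G.V
  E := G.E
  fintV := G.fintV
  fintE := G.fintE
  decV := G.decV
  decE := G.decE
  ends := G.ends
  conn := G.conn
  L := fun e => if e ∈ Q then w e else G.L e
  U := fun e => if e ∈ Q then w e else G.U e
  LU := fun e => by by_cases h : e ∈ Q <;> simp [h, G.LU e]
  pw := fun e => if e ∈ Q then w e else G.pw e
  pw_mem := fun e => by
    by_cases h : e ∈ Q
    · simp [h]
    · simpa [h] using G.pw_mem e

/-- A deterministic adaptive query algorithm: given the instance and the set of
already queried edges together with the revealed values, it either picks the next
edge to query or stops (`none`).  The lawfulness condition states that the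
decision may only depend on the revealed values of already queried edges. -/
structure Algorithm where
  next : ∀ G : UncGraph, Finset G.E → (G.E → ℝ) → Option G.E
  lawful : ∀ (G : UncGraph) (Q : Finset G.E) (w w' : G.E → ℝ),
    (∀ e ∈ Q, w e = w' e) → next G Q w = next G Q w'

namespace Algorithm

/-- The set of edges queried by `A` after `n` steps, on instance `G` with true
values `w`; the algorithm stops as soon as the queried set is feasible. -/
def runQueries (A : Algorithm) (G : UncGraph) (w : G.E → ℝ) : ℕ → Finset G.E
  | 0 => ∅
  | n + 1 =>
    let Q := A.runQueries G w n
    if G.Feasible w Q then Q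
    else
      match A.next G Q w with
      | some e => insert e Q
      | none => Q

/-- The final query set of the run of `A`. -/
def finalQueries (A : Algorithm) (G : UncGraph) (w : G.E → ℝ) : Finset G.E :=
  A.runQueries G w (Fintype.card G.E + 1)

/-- The number of queries made by `A` on instance `G` with true values `w`. -/
def algCost (A : Algorithm) (G : UncGraph) (w : G.E → ℝ) : ℕ :=
  (A.finalQueries G w).card

/-- `A` solves every instance: it always ends with a feasible query set. -/
def Solves (A : Algorithm) : Prop :=
  ∀ (G : UncGraph) (w : G.E → ℝ), G.Valid w → G.Feasible w (A.finalQueries G w)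

/-- `A` is `α`-consistent: on instances with correct predictions it makes at
most `α · |OPT|` queries. -/
def Consistent (A : Algorithm) (α : ℝ) : Prop :=
  ∀ G : UncGraph, (A.algCost G G.pw : ℝ) ≤ α * (G.optCost G.pw : ℝ)

/-- `A` is `β`-robust: it makes at most `β · |OPT|` queries on every instance. -/
def Robust (A : Algorithm) (β : ℝ) : Prop :=
  ∀ (G : UncGraph) (w : G.E → ℝ), G.Valid w → (A.algCost G w : ℝ) ≤ β * (G.optCost w : ℝ)

/-- Run of a preprocessing algorithm: it stops exactly when `next` returns
`none` (rather than when the queried set is feasible). -/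
def runPre (A : Algorithm) (G : UncGraph) (w : G.E → ℝ) : ℕ → Finset G.E
  | 0 => ∅
  | n + 1 =>
    let Q := A.runPre G w n
    match A.next G Q w with
    | some e => insert e Q
    | none => Q

/-- The final query set of a preprocessing run of `A`. -/
def preQueries (A : Algorithm) (G : UncGraph) (w : G.E → ℝ) : Finset G.E :=
  A.runPre G w (Fintype.card G.E + 1)

end Algorithm

/-!
Querying every edge except `e = uv` fixes all other weights `ω`, so `e` is mandatory exactly
when no single tree is an MST for every value of `e` in `I_e`. The cycle and cut exchange
arguments show that such a tree exists iff `u` and `v` are joined by other edges of weight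
`≤ L_e` (then some MST avoids `e` whatever its value) or are not joined by other edges of
weight `< U_e` (then some MST contains `e`); for a trivial edge one of the two always holds.
This criterion only sees on which side of `L_e` and `U_e` each other weight lies, and
`h←(e) = 0` says exactly that predicted and true weights lie on the same sides of a
non-trivial `I_e`. Hence every edge of `E_M Δ E_P` has `h←(e) ≥ 1`, and summing,
`|E_M Δ E_P| ≤ Σ h←(e) = Σ h→(e) = k_h`.
-/

theorem Finset.sum_update_of_mem_eq_add_sum_erase {α M : Type*} [DecidableEq α] [AddCommMonoid M]
    {s : Finset α} {i : α} (h : i ∈ s) {f : α → M} {b : M} :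
    ∑ x ∈ s, Function.update f i b x = b + ∑ x ∈ s.erase i, f x := by
  rw [Finset.sum_update_of_mem h, Finset.sdiff_singleton_eq_erase]

namespace UncGraph

open Finset Function

variable {G : UncGraph}

section Connectivity

variable {S D : Finset G.E} {f : G.E} {u v x y a b : G.V}

theorem connectsVia_refl (S : Finset G.E) (u : G.V) : G.ConnectsVia S u u :=
  Relation.ReflTransGen.refl

theorem connectsVia_of_mem (hf : f ∈ S) (hends : G.ends f = s(a, b)) : G.ConnectsVia S a b :=
  Relation.ReflTransGen.single ⟨f, hf, hends⟩

theorem ConnectsVia.trans (h : G.ConnectsVia S u v) (h' : G.ConnectsVia S v x) :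
    G.ConnectsVia S u x :=
  Relation.ReflTransGen.trans h h'

theorem ConnectsVia.mono (hSD : S ⊆ D) (h : G.ConnectsVia S u v) : G.ConnectsVia D u v :=
  Relation.ReflTransGen.mono (fun _ _ ⟨f, hf, hends⟩ => ⟨f, hSD hf, hends⟩) u v h

theorem ConnectsVia.symm (h : G.ConnectsVia S u v) : G.ConnectsVia S v u := by
  induction h with
  | refl => exact connectsVia_refl S u
  | tail _ hstep ih =>
    obtain ⟨f, hf, hends⟩ := hstep
    exact (connectsVia_of_mem hf (hends.trans Sym2.eq_swap)).trans ih

theorem ConnectsVia.of_insert (hends : G.ends f = s(a, b))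
    (h : G.ConnectsVia (insert f D) x y) :
    G.ConnectsVia D x y ∨ (G.ConnectsVia D x a ∧ G.ConnectsVia D b y) ∨
      (G.ConnectsVia D x b ∧ G.ConnectsVia D a y) := by
  induction h with
  | refl => exact Or.inl (connectsVia_refl D x)
  | @tail y z _ hstep ih =>
    obtain ⟨g, hg, hgends⟩ := hstep
    rcases mem_insert.1 hg with rfl | hgD
    · rw [hends, Sym2.eq_iff] at hgends
      rcases hgends with ⟨rfl, rfl⟩ | ⟨rfl, rfl⟩ <;>
        rcases ih with h | ⟨h, -⟩ | ⟨h, -⟩ <;>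
        simp only [h, connectsVia_refl, and_self, true_or, or_true]
    · have hyz := connectsVia_of_mem hgD hgends
      rcases ih with h | ⟨h, h'⟩ | ⟨h, h'⟩
      · exact Or.inl (h.trans hyz)
      · exact Or.inr (Or.inl ⟨h, h'.trans hyz⟩)
      · exact Or.inr (Or.inr ⟨h, h'.trans hyz⟩)

theorem ConnectsVia.of_insert_of_connectsVia (hends : G.ends f = s(a, b))
    (hab : G.ConnectsVia D a b) (h : G.ConnectsVia (insert f D) x y) : G.ConnectsVia D x y := by
  rcases h.of_insert hends with h | ⟨hxa, hby⟩ | ⟨hxb, hay⟩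
  · exact h
  · exact hxa.trans (hab.trans hby)
  · exact hxb.trans (hab.symm.trans hay)

theorem ConnectsVia.exists_crossing (h : G.ConnectsVia S u v) (hD : ¬ G.ConnectsVia D u v) :
    ∃ f ∈ S, f ∉ D ∧ ∃ a b, G.ends f = s(a, b) ∧ G.ConnectsVia D u a ∧ ¬ G.ConnectsVia D u b := by
  induction h with
  | refl => exact absurd (connectsVia_refl D u) hD
  | @tail y z _ hstep ih =>
    by_cases hy : G.ConnectsVia D u y
    · obtain ⟨f, hf, hends⟩ := hstep
      exact ⟨f, hf, fun hfD => hD (hy.trans (connectsVia_of_mem hfD hends)), y, z, hends, hy, hD⟩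
    · exact ih hy

def graphOf (S : Finset G.E) : SimpleGraph G.V :=
  SimpleGraph.fromEdgeSet ↑(S.image G.ends)

theorem ConnectsVia.reachable (h : G.ConnectsVia S u v) : (G.graphOf S).Reachable u v := by
  induction h with
  | refl => rfl
  | @tail y z _ hstep ih =>
    obtain ⟨f, hf, hends⟩ := hstep
    by_cases hyz : y = z
    · exact hyz ▸ ih
    · refine ih.trans (SimpleGraph.Adj.reachable ?_)
      rw [graphOf, SimpleGraph.fromEdgeSet_adj, ← hends]
      exact ⟨by simpa using ⟨f, hf, rfl⟩, hyz⟩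

theorem card_le_card_add_one_of_connectsVia (h : ∀ u v, G.ConnectsVia S u v) :
    Fintype.card G.V ≤ S.card + 1 := by
  cases isEmpty_or_nonempty G.V
  · simp
  have hconn : (G.graphOf S).Connected := ⟨fun u v => (h u v).reachable⟩
  calc Fintype.card G.V = Nat.card G.V := Nat.card_eq_fintype_card.symm
    _ ≤ Nat.card (G.graphOf S).edgeSet + 1 := hconn.card_vert_le_card_edgeSet_add_one
    _ ≤ S.card + 1 := by
      gcongr
      rw [graphOf, SimpleGraph.edgeSet_fromEdgeSet, Nat.card_coe_set_eq]
      calc (↑(S.image G.ends) \ Sym2.diagSet).ncard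
          ≤ (↑(S.image G.ends) : Set (Sym2 G.V)).ncard :=
            Set.ncard_le_ncard Set.sdiff_subset (Finset.finite_toSet _)
        _ = (S.image G.ends).card := Set.ncard_coe_finset _
        _ ≤ S.card := card_image_le

end Connectivity

section SpanningTree

variable {T W : Finset G.E} {e f g : G.E} {u v a b : G.V}

theorem IsSpanningTree.not_connectsVia_erase (hT : G.IsSpanningTree T) (hf : f ∈ T)
    (hends : G.ends f = s(a, b)) : ¬ G.ConnectsVia (T.erase f) a b := by
  intro hab
  have hconn : ∀ x y, G.ConnectsVia (T.erase f) x y := fun x y =>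
    hab.of_insert_of_connectsVia hends (by rw [insert_erase hf]; exact hT.1 x y)
  have hcard := card_le_card_add_one_of_connectsVia hconn
  have herase := card_erase_add_one hf
  have hV := hT.2
  omega

theorem IsSpanningTree.connectsVia_erase_or (hT : G.IsSpanningTree T) (hf : f ∈ T)
    (hends : G.ends f = s(a, b)) (x : G.V) :
    G.ConnectsVia (T.erase f) x a ∨ G.ConnectsVia (T.erase f) x b := by
  have hxa : G.ConnectsVia (insert f (T.erase f)) x a := by
    rw [insert_erase hf]; exact hT.1 x a
  rcases hxa.of_insert hends with h | ⟨h, -⟩ | ⟨h, -⟩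
  · exact Or.inl h
  · exact Or.inl h
  · exact Or.inr h

theorem IsSpanningTree.exchange (hT : G.IsSpanningTree T) (hg : g ∈ T) (hf : f ∉ T.erase g)
    (hends : G.ends f = s(a, b))
    (hab : ∀ x, G.ConnectsVia (T.erase g) x a ∨ G.ConnectsVia (T.erase g) x b) :
    G.IsSpanningTree (insert f (T.erase g)) := by
  refine ⟨fun x y => ?_, ?_⟩
  · have hstep : G.ConnectsVia (insert f (T.erase g)) a b :=
      connectsVia_of_mem (mem_insert_self f _) hends
    have hxa : ∀ x, G.ConnectsVia (insert f (T.erase g)) x a := fun x => by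
      rcases hab x with h | h
      · exact h.mono (subset_insert f _)
      · exact (h.mono (subset_insert f _)).trans hstep.symm
    exact (hxa x).trans (hxa y).symm
  · rw [card_insert_of_notMem hf, card_erase_add_one hg, hT.2]

theorem IsSpanningTree.exchange_out (hT : G.IsSpanningTree T) (he : e ∈ T)
    (hends : G.ends e = s(u, v)) (hW : G.ConnectsVia W u v) (heW : e ∉ W) :
    ∃ f ∈ W, f ∉ T ∧ G.IsSpanningTree (insert f (T.erase e)) := by
  obtain ⟨f, hfW, hfD, a, b, hfends, hua, hub⟩ :=
    hW.exists_crossing (hT.not_connectsVia_erase he hends)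
  have hfe : f ≠ e := fun h => heW (h ▸ hfW)
  have hbv : G.ConnectsVia (T.erase e) b v :=
    (hT.connectsVia_erase_or he hends b).resolve_left fun h => hub h.symm
  refine ⟨f, hfW, fun hfT => hfD (mem_erase.2 ⟨hfe, hfT⟩), hT.exchange he hfD hfends fun x => ?_⟩
  exact (hT.connectsVia_erase_or he hends x).imp (·.trans hua) (·.trans hbv.symm)

theorem IsSpanningTree.exchange_in (hT : G.IsSpanningTree T) (he : e ∉ T)
    (hends : G.ends e = s(u, v)) (hW : ¬ G.ConnectsVia W u v) :
    ∃ f ∈ T, f ∉ W ∧ G.IsSpanningTree (insert e (T.erase f)) := by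
  -- a minimal subset of `T` connecting `u` and `v` is the tree path between them
  obtain ⟨M, ⟨hMT, hM⟩, hMmin⟩ := Set.exists_min_image {M | M ⊆ T ∧ G.ConnectsVia M u v} card
    (Set.toFinite _) ⟨T, subset_rfl, hT.1 u v⟩
  obtain ⟨f, hfM, hfW, a, b, hfends, -⟩ := hM.exists_crossing hW
  have hfT := hMT hfM
  have hMf : ¬ G.ConnectsVia (M.erase f) u v := fun h =>
    (card_erase_lt_of_mem hfM).not_ge (hMmin _ ⟨(erase_subset f M).trans hMT, h⟩)
  have hMT' : M.erase f ⊆ T.erase f := erase_subset_erase f hMT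
  have hsides : (G.ConnectsVia (T.erase f) a u ∧ G.ConnectsVia (T.erase f) b v) ∨
      (G.ConnectsVia (T.erase f) a v ∧ G.ConnectsVia (T.erase f) b u) := by
    have h : G.ConnectsVia (insert f (M.erase f)) u v := by rwa [insert_erase hfM]
    rcases h.of_insert hfends with h | ⟨hua, hbv⟩ | ⟨hub, hav⟩
    · exact absurd h hMf
    · exact Or.inl ⟨(hua.mono hMT').symm, hbv.mono hMT'⟩
    · exact Or.inr ⟨hav.mono hMT', (hub.mono hMT').symm⟩
  refine ⟨f, hfT, hfW, hT.exchange hfT (fun h => he (mem_of_mem_erase h)) hends fun x => ?_⟩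
  rcases hsides with ⟨hau, hbv⟩ | ⟨hav, hbu⟩
  · exact (hT.connectsVia_erase_or hfT hfends x).imp (·.trans hau) (·.trans hbv)
  · exact (hT.connectsVia_erase_or hfT hfends x).symm.imp (·.trans hbu) (·.trans hav)

end SpanningTree

section MST

variable {ω : G.E → ℝ} {T : Finset G.E} {e : G.E} {u v : G.V}

variable (G) in
def otherEdgesWith (ω : G.E → ℝ) (e : G.E) (p : ℝ → Prop) : Finset G.E :=
  (univ.erase e).filter fun f => p (ω f)

@[simp]
theorem mem_otherEdgesWith {p : ℝ → Prop} {f : G.E} :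
    f ∈ G.otherEdgesWith ω e p ↔ f ≠ e ∧ p (ω f) := by
  simp [otherEdgesWith]

theorem otherEdgesWith_congr {ω' : G.E → ℝ} {p : ℝ → Prop} (h : ∀ f ≠ e, p (ω f) ↔ p (ω' f)) :
    G.otherEdgesWith ω e p = G.otherEdgesWith ω' e p := by
  ext f
  simp only [mem_otherEdgesWith]
  exact and_congr_right (h f)

theorem I_eq_Ioo (h : G.L e < G.U e) : G.I e = Set.Ioo (G.L e) (G.U e) := by
  ext x
  simp [I, h.ne]

theorem I_subset_Icc : G.I e ⊆ Set.Icc (G.L e) (G.U e) := by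
  rintro x (⟨hLU, rfl⟩ | ⟨hL, hU⟩)
  · exact ⟨le_rfl, hLU.le⟩
  · exact ⟨hL.le, hU.le⟩

theorem connectsVia_or_of_L_eq_U (hLU : G.L e = G.U e) :
    G.ConnectsVia (G.otherEdgesWith ω e (· ≤ G.L e)) u v ∨
      ¬ G.ConnectsVia (G.otherEdgesWith ω e (· < G.U e)) u v := by
  refine or_not_of_imp fun h => h.mono fun f hf => ?_
  simp only [mem_otherEdgesWith] at hf ⊢
  exact ⟨hf.1, hLU ▸ hf.2.le⟩

theorem connectsVia_or_of_isMST_update (hends : G.ends e = s(u, v))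
    (hT : ∀ x ∈ G.I e, G.IsMST (update ω e x) T) :
    G.ConnectsVia (G.otherEdgesWith ω e (· ≤ G.L e)) u v ∨
      ¬ G.ConnectsVia (G.otherEdgesWith ω e (· < G.U e)) u v := by
  have hTst : G.IsSpanningTree T := (hT _ (G.pw_mem e)).1
  rcases (G.LU e).eq_or_lt with hLU | hLU
  · exact connectsVia_or_of_L_eq_U hLU
  rw [I_eq_Ioo hLU] at hT
  by_contra! h
  obtain ⟨hlow, hup⟩ := h
  by_cases he : e ∈ T
  · obtain ⟨f, hf, hfT, hT'⟩ := hTst.exchange_out he hends hup (by simp)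
    have hfe : f ≠ e := (ne_of_mem_of_not_mem he hfT).symm
    have hle : ∀ x ∈ Set.Ioo (G.L e) (G.U e), x ≤ ω f := fun x hx => by
      have := (hT x hx).2 _ hT'
      rw [sum_update_of_mem_eq_add_sum_erase he, sum_update_of_notMem (by simp [hfe.symm]),
        sum_insert fun h => hfT (mem_of_mem_erase h)] at this
      linarith
    exact ((isLUB_Ioo hLU).2 hle).not_gt (mem_otherEdgesWith.1 hf).2
  · obtain ⟨f, hfT, hfW, hT'⟩ := hTst.exchange_in he hends hlow
    have hfe : f ≠ e := ne_of_mem_of_not_mem hfT he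
    have hge : ∀ x ∈ Set.Ioo (G.L e) (G.U e), ω f ≤ x := fun x hx => by
      have := (hT x hx).2 _ hT'
      rw [sum_update_of_notMem he, sum_update_of_mem_eq_add_sum_erase (mem_insert_self e _),
        erase_insert fun h => he (mem_of_mem_erase h), ← add_sum_erase T ω hfT] at this
      linarith
    exact hfW (mem_otherEdgesWith.2 ⟨hfe, (isGLB_Ioo hLU).2 hge⟩)

theorem exists_isMST_update_of_connectsVia (hends : G.ends e = s(u, v))
    (hT₀ : G.IsSpanningTree T) (hlow : G.ConnectsVia (G.otherEdgesWith ω e (· ≤ G.L e)) u v) :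
    ∃ T, ∀ x, G.L e ≤ x → G.IsMST (update ω e x) T := by
  have hout : ∀ T', G.IsSpanningTree T' → e ∈ T' → ∃ T'', G.IsSpanningTree T'' ∧ e ∉ T'' ∧
      ∑ f ∈ T'', ω f ≤ G.L e + ∑ f ∈ T'.erase e, ω f := fun T' hT' he => by
    obtain ⟨f, hf, hfT, hT''⟩ := hT'.exchange_out he hends hlow (by simp)
    refine ⟨_, hT'', by simp [ne_of_mem_of_not_mem he hfT], ?_⟩
    rw [sum_insert fun h => hfT (mem_of_mem_erase h)]
    exact add_le_add_left (mem_otherEdgesWith.1 hf).2 _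
  have hne : ∃ T, G.IsSpanningTree T ∧ e ∉ T := by
    by_cases he : e ∈ T
    · obtain ⟨T'', hT'', he'', -⟩ := hout T hT₀ he
      exact ⟨T'', hT'', he''⟩
    · exact ⟨T, hT₀, he⟩
  obtain ⟨T, ⟨hT, heT⟩, hmin⟩ := Set.exists_min_image {T | G.IsSpanningTree T ∧ e ∉ T}
    (fun T => ∑ f ∈ T, ω f) (Set.toFinite _) hne
  refine ⟨T, fun x hx => ⟨hT, fun T' hT' => ?_⟩⟩
  rw [sum_update_of_notMem heT]
  by_cases he' : e ∈ T'
  · obtain ⟨T'', hT'', he'', hsum⟩ := hout T' hT' he'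
    rw [sum_update_of_mem_eq_add_sum_erase he']
    linarith [hmin T'' ⟨hT'', he''⟩]
  · rw [sum_update_of_notMem he']
    exact hmin T' ⟨hT', he'⟩

theorem exists_isMST_update_of_not_connectsVia (hends : G.ends e = s(u, v))
    (hT₀ : G.IsSpanningTree T) (hup : ¬ G.ConnectsVia (G.otherEdgesWith ω e (· < G.U e)) u v) :
    ∃ T, ∀ x ≤ G.U e, G.IsMST (update ω e x) T := by
  have hin : ∀ T', G.IsSpanningTree T' → e ∉ T' → ∃ T'', G.IsSpanningTree T'' ∧ e ∈ T'' ∧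
      G.U e + ∑ f ∈ T''.erase e, ω f ≤ ∑ f ∈ T', ω f := fun T' hT' he => by
    obtain ⟨f, hfT, hfW, hT''⟩ := hT'.exchange_in he hends hup
    refine ⟨_, hT'', mem_insert_self e _, ?_⟩
    rw [erase_insert fun h => he (mem_of_mem_erase h), ← add_sum_erase T' ω hfT]
    refine add_le_add_left (not_lt.1 fun h => hfW ?_) _
    exact mem_otherEdgesWith.2 ⟨ne_of_mem_of_not_mem hfT he, h⟩
  have hne : ∃ T, G.IsSpanningTree T ∧ e ∈ T := by
    by_cases he : e ∈ T
    · exact ⟨T, hT₀, he⟩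
    · obtain ⟨T'', hT'', he'', -⟩ := hin T hT₀ he
      exact ⟨T'', hT'', he''⟩
  obtain ⟨T, ⟨hT, heT⟩, hmin⟩ := Set.exists_min_image {T | G.IsSpanningTree T ∧ e ∈ T}
    (fun T => ∑ f ∈ T.erase e, ω f) (Set.toFinite _) hne
  refine ⟨T, fun x hx => ⟨hT, fun T' hT' => ?_⟩⟩
  rw [sum_update_of_mem_eq_add_sum_erase heT]
  by_cases he' : e ∈ T'
  · rw [sum_update_of_mem_eq_add_sum_erase he']
    exact add_le_add_right (hmin T' ⟨hT', he'⟩) _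
  · obtain ⟨T'', hT'', he'', hsum⟩ := hin T' hT' he'
    rw [sum_update_of_notMem he']
    linarith [hmin T'' ⟨hT'', he''⟩]

end MST

section Mandatory

variable {ω : G.E → ℝ} {e : G.E} {u v : G.V}

theorem mandatory_iff_not_feasible_erase :
    G.Mandatory ω e ↔ ¬ G.Feasible ω (univ.erase e) := by
  refine ⟨fun h hQ => notMem_erase e _ (h _ hQ), fun h Q ⟨T, hT⟩ => by_contra fun he => h ?_⟩
  refine ⟨T, fun wf hwf => hT wf ⟨fun f hf => hwf.1 f ?_, hwf.2⟩⟩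
  exact mem_erase.2 ⟨ne_of_mem_of_not_mem hf he, mem_univ f⟩

theorem feasible_erase_iff (hω : G.Valid ω) :
    G.Feasible ω (univ.erase e) ↔ ∃ T, ∀ x ∈ G.I e, G.IsMST (update ω e x) T := by
  refine exists_congr fun T =>
    ⟨fun hT x hx => hT _ ⟨fun f hf => ?_, fun f => ?_⟩, fun hT wf hwf => ?_⟩
  · exact update_of_ne (ne_of_mem_erase hf) _ _
  · by_cases hfe : f = e
    · subst hfe
      simpa using hx
    · simpa [hfe] using hω f
  · have hwf_eq : wf = update ω e (wf e) := by
      funext f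
      by_cases hfe : f = e
      · subst hfe
        simp
      · simp [hfe, hwf.1 f (by simp [hfe])]
    rw [hwf_eq]
    exact hT _ (hwf.2 e)

theorem feasible_erase_iff_connectsVia (hω : G.Valid ω) (hends : G.ends e = s(u, v)) :
    G.Feasible ω (univ.erase e) ↔ (∃ T, G.IsSpanningTree T) ∧
      (G.ConnectsVia (G.otherEdgesWith ω e (· ≤ G.L e)) u v ∨
        ¬ G.ConnectsVia (G.otherEdgesWith ω e (· < G.U e)) u v) := by
  rw [feasible_erase_iff hω]
  constructor
  · rintro ⟨T, hT⟩
    exact ⟨⟨T, (hT _ (G.pw_mem e)).1⟩, connectsVia_or_of_isMST_update hends hT⟩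
  · rintro ⟨⟨T, hT⟩, hlow | hup⟩
    · obtain ⟨T', hT'⟩ := exists_isMST_update_of_connectsVia hends hT hlow
      exact ⟨T', fun x hx => hT' x (I_subset_Icc hx).1⟩
    · obtain ⟨T', hT'⟩ := exists_isMST_update_of_not_connectsVia hends hT hup
      exact ⟨T', fun x hx => hT' x (I_subset_Icc hx).2⟩

theorem kErr_eq_zero_iff (hLU : G.L e < G.U e) {p w : G.E → ℝ} {f : G.E} :
    G.kErr p w f e = 0 ↔ (p f ≤ G.L e ↔ w f ≤ G.L e) ∧ (p f < G.U e ↔ w f < G.U e) := by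
  rw [kErr]
  split_ifs <;> grind

theorem mandatory_iff_predMandatory_of_hleft_eq_zero {w : G.E → ℝ} (hw : G.Valid w)
    (h : G.hleft G.pw w e = 0) : G.Mandatory w e ↔ G.PredMandatory e := by
  obtain ⟨u, v, hends⟩ : ∃ u v, G.ends e = s(u, v) := Sym2.exists.1 ⟨G.ends e, rfl⟩
  rw [PredMandatory, mandatory_iff_not_feasible_erase, mandatory_iff_not_feasible_erase,
    feasible_erase_iff_connectsVia hw hends, feasible_erase_iff_connectsVia G.pw_mem hends]
  rcases (G.LU e).eq_or_lt with hLU | hLU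
  · simp only [connectsVia_or_of_L_eq_U hLU, and_true]
  have hsame : ∀ f ≠ e, (w f ≤ G.L e ↔ G.pw f ≤ G.L e) ∧ (w f < G.U e ↔ G.pw f < G.U e) :=
    fun f hf => by
      have := sum_eq_zero_iff.1 h f (mem_erase.2 ⟨hf, mem_univ f⟩)
      rw [kErr_eq_zero_iff hLU] at this
      exact ⟨this.1.symm, this.2.symm⟩
  rw [otherEdgesWith_congr (ω := w) fun f hf => (hsame f hf).1,
    otherEdgesWith_congr (ω := w) fun f hf => (hsame f hf).2]

end Mandatory

theorem sum_hleft_eq_hopDist (p w : G.E → ℝ) : ∑ e, G.hleft p w e = G.hopDist p w :=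
  sum_comm' fun e f => by simp [ne_comm]

end UncGraph

/-- every edge in the symmetric difference of the mandatory set
`E_M` and the prediction mandatory set `E_P` has `h←(e) ≥ 1`; consequently
`k_h ≥ |E_M Δ E_P|`. -/
theorem hop_distance_ge_mandatory_symmdiff
    (G : UncGraph) (w : G.E → ℝ) (hw : G.Valid w) :
    (∀ e : G.E,
      ((G.Mandatory w e ∧ ¬ G.PredMandatory e) ∨
        (G.PredMandatory e ∧ ¬ G.Mandatory w e)) →
      1 ≤ G.hleft G.pw w e) ∧
    (Finset.univ.filter fun e : G.E =>
        (G.Mandatory w e ∧ ¬ G.PredMandatory e) ∨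
          (G.PredMandatory e ∧ ¬ G.Mandatory w e)).card ≤ G.khop w := by
  have hsymm : ∀ e : G.E, ((G.Mandatory w e ∧ ¬ G.PredMandatory e) ∨
      (G.PredMandatory e ∧ ¬ G.Mandatory w e)) → 1 ≤ G.hleft G.pw w e := by
    intro e he
    by_contra! h0
    have := G.mandatory_iff_predMandatory_of_hleft_eq_zero hw (Nat.lt_one_iff.1 h0)
    tauto
  refine ⟨hsymm, ?_⟩
  calc _ = ∑ e ∈ _, 1 := Finset.card_eq_sum_ones _
    _ ≤ ∑ e ∈ _, G.hleft G.pw w e :=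
      Finset.sum_le_sum fun e he => hsymm e (Finset.mem_filter.1 he).2
    _ ≤ ∑ e, G.hleft G.pw w e := Finset.sum_le_sum_of_subset (Finset.filter_subset _ _)
    _ = G.khop w := G.sum_hleft_eq_hopDist G.pw w
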